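/- arXiv:1504.02934 — 5 statements merged into one kernel-verified Lean document; each statement's English description precedes it below -/
import Mathlib

section
/- Let R be a finite local ring with maximal ideal M such that |R|/|M| is odd. Then the quadratic unitary Cayley graph 𝒢_R is isomorphic to the tensor product 𝒢_{R/M} ⊗ K̊_{|M|}, where K̊_n is the complete graph on n vertices with a loop attached at every vertex. -/
/-- The set of squares of units of a commutative ring. -/
def QR (R : Type*) [CommRing R] : Set R := {x | ∃ u : Rˣ, (u : R) ^ 2 = x}

/-- The connection set of the quadratic unitary Cayley graph. -/
def TR (R : Type*) [CommRing R] : Set R := QR R ∪ -(QR R)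

section Aux

variable {R : Type*} [CommRing R] [IsLocalRing R] [Finite R]

lemma two_ne_zero_quot (M : Ideal R) (hM : M.IsMaximal)
    (hodd : Odd (Nat.card (R ⧸ M))) : (2 : R ⧸ M) ≠ 0 := by
  haveI := Ideal.Quotient.nontrivial_iff.mpr hM.ne_top
  intro h2
  have h1 : (2 : ℕ) • (1 : R ⧸ M) = 0 := by
    rw [two_smul, one_add_one_eq_two, h2]
  have hord : addOrderOf (1 : R ⧸ M) = 2 :=
    haveI : Fact (Nat.Prime 2) := ⟨Nat.prime_two⟩
    addOrderOf_eq_prime h1 one_ne_zero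
  have hdvd : addOrderOf (1 : R ⧸ M) ∣ Nat.card (R ⧸ M) := addOrderOf_dvd_natCard _
  rw [hord] at hdvd
  rw [Nat.odd_iff] at hodd
  omega

lemma isUnit_of_image_unit (M : Ideal R) (hM : M.IsMaximal) {z : R}
    (hz : IsUnit (Ideal.Quotient.mk M z)) : IsUnit z := by
  by_contra h
  have hzM : z ∈ M := by
    rw [IsLocalRing.eq_maximalIdeal hM, IsLocalRing.mem_maximalIdeal]
    exact h
  have h0 : Ideal.Quotient.mk M z = 0 := Ideal.Quotient.eq_zero_iff_mem.mpr hzM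
  rw [h0] at hz
  haveI := Ideal.Quotient.nontrivial_iff.mpr hM.ne_top
  obtain ⟨u, hu⟩ := hz
  apply one_ne_zero (α := R ⧸ M)
  calc (1 : R ⧸ M) = ↑u⁻¹ * ↑u := by rw [u.inv_mul]
    _ = ↑u⁻¹ * 0 := by rw [hu]
    _ = 0 := mul_zero _

lemma sq_lift (M : Ideal R) (hM : M.IsMaximal) (hodd : Odd (Nat.card (R ⧸ M)))
    {w : R} (hw : Ideal.Quotient.mk M w = 1) :
    ∃ v : R, IsUnit v ∧ v ^ 2 = w := by
  haveI := hM
  letI : Field (R ⧸ M) := Ideal.Quotient.field M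
  have h2 : (2 : R ⧸ M) ≠ 0 := two_ne_zero_quot M hM hodd
  have hmem : ∀ m : M, 2 * (m : R) + m * m ∈ M :=
    fun m => M.add_mem (M.mul_mem_left 2 m.2) (M.mul_mem_left _ m.2)
  set g : M → M := fun m => ⟨2 * (m : R) + m * m, hmem m⟩ with hg
  have hginj : Function.Injective g := by
    intro a b hab
    have hab' : 2 * (a : R) + a * a = 2 * (b : R) + b * b := congrArg Subtype.val hab
    have key : ((a : R) - b) * (2 + a + b) = 0 := by linear_combination hab'
    have hunit : IsUnit ((2 : R) + a + b) := by
      apply isUnit_of_image_unit M hM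
      have himg : Ideal.Quotient.mk M ((2 : R) + a + b) = 2 := by
        rw [map_add, map_add, Ideal.Quotient.eq_zero_iff_mem.mpr a.2,
          Ideal.Quotient.eq_zero_iff_mem.mpr b.2, add_zero, add_zero, map_ofNat]
      rw [himg]
      exact Ne.isUnit h2
    have hab0 : (a : R) - b = 0 := by
      obtain ⟨u, hu⟩ := hunit
      have h := congrArg (· * (↑u⁻¹ : R)) key
      simp only [zero_mul] at h
      rw [← hu, mul_assoc, Units.mul_inv, mul_one] at h
      exact h
    ext
    exact sub_eq_zero.mp hab0
  have hgsurj : Function.Surjective g := Finite.surjective_of_injective hginj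
  have hwM : w - 1 ∈ M := by
    rw [← Ideal.Quotient.eq_zero_iff_mem, map_sub, hw, map_one, sub_self]
  obtain ⟨m, hm⟩ := hgsurj ⟨w - 1, hwM⟩
  have hm' : 2 * (m : R) + m * m = w - 1 := congrArg Subtype.val hm
  refine ⟨1 + m, ?_, by linear_combination hm'⟩
  apply isUnit_of_image_unit M hM
  have h1 : Ideal.Quotient.mk M (1 + (m : R)) = 1 := by
    rw [map_add, map_one, Ideal.Quotient.eq_zero_iff_mem.mpr m.2, add_zero]
  rw [h1]; exact isUnit_one

lemma QR_lift (M : Ideal R) (hM : M.IsMaximal) (hodd : Odd (Nat.card (R ⧸ M)))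
    {z : R} (hz : Ideal.Quotient.mk M z ∈ QR (R ⧸ M)) : z ∈ QR R := by
  obtain ⟨u, hu⟩ := hz
  obtain ⟨r, hr⟩ := Ideal.Quotient.mk_surjective (I := M) (u : R ⧸ M)
  have hru : IsUnit r := by
    apply isUnit_of_image_unit M hM; rw [hr]; exact u.isUnit
  obtain ⟨ru, hruv⟩ := hru
  have hπw : Ideal.Quotient.mk M (z * ((ru⁻¹ : Rˣ) : R) ^ 2) = 1 := by
    have h1' : (u : R ⧸ M) * Ideal.Quotient.mk M ((ru⁻¹ : Rˣ) : R) = 1 := by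
      rw [← hr, ← hruv, ← map_mul, Units.mul_inv, map_one]
    calc Ideal.Quotient.mk M (z * ((ru⁻¹ : Rˣ) : R) ^ 2)
        = Ideal.Quotient.mk M z * (Ideal.Quotient.mk M ((ru⁻¹ : Rˣ) : R)) ^ 2 := by
          rw [map_mul, map_pow]
      _ = ((u : R ⧸ M) * Ideal.Quotient.mk M ((ru⁻¹ : Rˣ) : R)) ^ 2 := by
          rw [← hu]; ring
      _ = 1 := by rw [h1', one_pow]
  obtain ⟨v, hv, hv2⟩ := sq_lift M hM hodd hπw
  obtain ⟨vu, hvu⟩ := hv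
  refine ⟨vu * ru, ?_⟩
  calc ((vu * ru : Rˣ) : R) ^ 2 = (vu : R) ^ 2 * (ru : R) ^ 2 := by
        rw [Units.val_mul]; ring
    _ = z * ((ru⁻¹ : Rˣ) : R) ^ 2 * (ru : R) ^ 2 := by rw [hvu, hv2]
    _ = z * (((ru⁻¹ : Rˣ) : R) * (ru : R)) ^ 2 := by ring
    _ = z := by rw [Units.inv_mul, one_pow, mul_one]

lemma TR_iff (M : Ideal R) (hM : M.IsMaximal) (hodd : Odd (Nat.card (R ⧸ M)))
    (z : R) : z ∈ TR R ↔ Ideal.Quotient.mk M z ∈ TR (R ⧸ M) := by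
  constructor
  · rintro (⟨u, hu⟩ | h)
    · exact Or.inl ⟨Units.map (Ideal.Quotient.mk M).toMonoidHom u, by
        simp [Units.coe_map, ← map_pow, hu]⟩
    · obtain ⟨u, hu⟩ := Set.mem_neg.mp h
      refine Or.inr (Set.mem_neg.mpr ⟨Units.map (Ideal.Quotient.mk M).toMonoidHom u, ?_⟩)
      simp [Units.coe_map, ← map_pow, hu, map_neg]
  · rintro (h | h)
    · exact Or.inl (QR_lift M hM hodd h)
    · rw [Set.mem_neg, ← map_neg] at h
      exact Or.inr (Set.mem_neg.mpr (QR_lift M hM hodd h))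

end Aux

/-- `𝒢_R ≅ 𝒢_{R/M} ⊗ K̊_{|M|}`: there is a bijection `R ≃ (R/M) × M` under which
adjacency in `𝒢_R` corresponds to adjacency in the tensor product of `𝒢_{R/M}` with the
complete pseudograph on `M` (in which any two vertices, equal or not, are adjacent). -/
theorem stmt4 (R : Type*) [CommRing R] [IsLocalRing R] [Finite R]
    (M : Ideal R) (hM : M.IsMaximal)
    (hodd : Odd (Nat.card (R ⧸ M))) :
    ∃ e : R ≃ (R ⧸ M) × M,
      ∀ x y : R, (x - y ∈ TR R) ↔ ((e x).1 - (e y).1 ∈ TR (R ⧸ M)) := by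
  have hsurj : Function.Surjective (Ideal.Quotient.mk M) := Ideal.Quotient.mk_surjective
  set s : R ⧸ M → R := Function.surjInv hsurj with hs
  have hsec : ∀ q, Ideal.Quotient.mk M (s q) = q := fun q => Function.surjInv_eq hsurj q
  have hmemM : ∀ x : R, x - s (Ideal.Quotient.mk M x) ∈ M := by
    intro x
    rw [← Ideal.Quotient.eq_zero_iff_mem, map_sub, hsec, sub_self]
  refine ⟨{
    toFun := fun x => (Ideal.Quotient.mk M x, ⟨x - s (Ideal.Quotient.mk M x), hmemM x⟩)
    invFun := fun p => s p.1 + (p.2 : R)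
    left_inv := by intro x; simp
    right_inv := by
      rintro ⟨q, m⟩
      have h1 : Ideal.Quotient.mk M (s q + (m : R)) = q := by
        rw [map_add, hsec, Ideal.Quotient.eq_zero_iff_mem.mpr m.2, add_zero]
      ext
      · simpa using h1
      · simp [h1]
  }, ?_⟩
  intro x y
  simp only [Equiv.coe_fn_mk]
  rw [← map_sub]
  exact TR_iff M hM hodd (x - y)
end

section
/- Let A and B be finite commutative rings. Then 𝒢_{A×B} = 𝒢_A ⊗ 𝒢_B if and only if −1 ∈ Q_A or −1 ∈ Q_B, where equality of graphs means T_{A×B} = T_A × T_B. -/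
lemma one_mem_QR (R : Type*) [CommRing R] : (1 : R) ∈ QR R := ⟨1, by simp⟩

lemma neg_mem_QR {R : Type*} [CommRing R] (h : (-1 : R) ∈ QR R) {x : R} (hx : x ∈ QR R) :
    -x ∈ QR R := by
  obtain ⟨w, hw⟩ := h
  obtain ⟨u, hu⟩ := hx
  refine ⟨w * u, ?_⟩
  push_cast
  rw [mul_pow, hw, hu]; ring

lemma QR_prod {A B : Type*} [CommRing A] [CommRing B] (x : A × B) :
    x ∈ QR (A × B) ↔ x.1 ∈ QR A ∧ x.2 ∈ QR B := by
  constructor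
  · rintro ⟨u, rfl⟩
    refine ⟨⟨⟨u.val.1, u.inv.1, congrArg Prod.fst u.val_inv, congrArg Prod.fst u.inv_val⟩, ?_⟩,
            ⟨⟨u.val.2, u.inv.2, congrArg Prod.snd u.val_inv, congrArg Prod.snd u.inv_val⟩, ?_⟩⟩ <;>
      simp
  · rintro ⟨⟨u, hu⟩, ⟨v, hv⟩⟩
    refine ⟨⟨(u.val, v.val), (u.inv, v.inv), ?_, ?_⟩, ?_⟩
    · exact Prod.ext u.val_inv v.val_inv
    · exact Prod.ext u.inv_val v.inv_val
    · exact Prod.ext (by simpa using hu) (by simpa using hv)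

theorem stmt5 (A B : Type*) [CommRing A] [CommRing B] [Finite A] [Finite B] :
    TR (A × B) = (TR A) ×ˢ (TR B) ↔ (-1 ∈ QR A ∨ -1 ∈ QR B) := by
  constructor
  · intro h
    have h1 : ((1 : A), (-1 : B)) ∈ TR (A × B) := by
      rw [h]
      refine ⟨Or.inl (one_mem_QR A), Or.inr ?_⟩
      rw [Set.mem_neg]; simpa using one_mem_QR B
    rcases h1 with h1 | h1
    · right; exact ((QR_prod _).1 h1).2
    · left
      rw [Set.mem_neg] at h1
      have := ((QR_prod _).1 h1).1
      simpa using this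
  · intro h
    ext x
    simp only [TR, Set.mem_union, Set.mem_neg, Set.mem_prod, QR_prod, Prod.fst_neg, Prod.snd_neg]
    rcases h with hA | hB
    · have key : ∀ a : A, a ∈ QR A ↔ -a ∈ QR A :=
        fun a => ⟨neg_mem_QR hA, fun h' => by simpa using neg_mem_QR hA h'⟩
      have k1 := key x.1
      tauto
    · have key : ∀ b : B, b ∈ QR B ↔ -b ∈ QR B :=
        fun b => ⟨neg_mem_QR hB, fun h' => by simpa using neg_mem_QR hB h'⟩
      have k2 := key x.2
      tauto
end

section
/- Let p ≡ 3 (mod 4) be a prime and α ≥ 1 an integer. Then the quadratic unitary Cayley graph 𝒢_{Z_{p^α}} has spectrum: eigenvalue p^{α−1}(p−1) with multiplicity 1, eigenvalue −p^{α−1} with multiplicity p−1, and eigenvalue 0 with multiplicity p^α − p. -/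
open Polynomial

open scoped Classical in
/-- Adjacency matrix of the quadratic unitary Cayley graph `𝒢_R`. -/
noncomputable def adjMat (R : Type*) [CommRing R] [Fintype R] : Matrix R R ℝ :=
  fun x y => if x - y ∈ TR R then 1 else 0

/-! ### Auxiliary linear algebra -/

open Matrix

section CharpolyAux

variable {n : Type*} [Fintype n] [DecidableEq n]

lemma charmatrix_eq' (M : Matrix n n ℝ) :
    charmatrix M = Matrix.diagonal (fun _ => (X : ℝ[X])) - M.map C := by
  ext i j
  rw [charmatrix_apply]
  simp [Matrix.sub_apply, Matrix.map_apply]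

lemma charpoly_conj' (A P Q : Matrix n n ℝ) (hPQ : P * Q = 1) :
    (P * A * Q).charpoly = A.charpoly := by
  have hmapPQ : P.map C * Q.map C = 1 := by
    have := congrArg (fun M : Matrix n n ℝ => (RingHom.mapMatrix (C : ℝ →+* ℝ[X])) M) hPQ
    simpa [RingHom.mapMatrix_apply, Matrix.map_mul] using this
  have hdiag : ∀ M : Matrix n n ℝ[X], M * Matrix.diagonal (fun _ => (X:ℝ[X]))
      = Matrix.diagonal (fun _ => (X:ℝ[X])) * M := by
    intro M; ext i j; simp [Matrix.mul_diagonal, Matrix.diagonal_mul, mul_comm]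
  have key : charmatrix (P * A * Q) = P.map C * charmatrix A * Q.map C := by
    rw [charmatrix_eq', charmatrix_eq', mul_sub, sub_mul]
    congr 1
    · rw [hdiag (P.map C), mul_assoc, hmapPQ, mul_one]
    · simp [Matrix.map_mul, mul_assoc]
  unfold Matrix.charpoly
  rw [key, det_mul, det_mul, mul_comm (P.map C).det, mul_assoc, ← det_mul, hmapPQ, det_one, mul_one]

lemma charpoly_diagonal' (d : n → ℝ) :
    (Matrix.diagonal d).charpoly = ∏ i, (X - C (d i)) := by
  unfold Matrix.charpoly
  rw [charmatrix_eq']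
  have : Matrix.diagonal (fun _ => (X:ℝ[X])) - (Matrix.diagonal d).map C
      = Matrix.diagonal (fun i => X - C (d i)) := by
    ext i j
    by_cases h : i = j <;> simp [h, Matrix.diagonal_apply_ne, Matrix.map_apply]
  rw [this, det_diagonal]

end CharpolyAux

/-! ### Explicit diagonalization matrices -/

section SmatTmat

variable {ι : Type*} [Fintype ι] [DecidableEq ι]

noncomputable def Smat (o : ι) : Matrix ι ι ℝ :=
  Matrix.of fun i j => (if j = o then 1 else 0) + (if i = o then 1 else 0) - (if i = j then (1:ℝ) else 0)

noncomputable def Tmat (o : ι) : Matrix ι ι ℝ :=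
  Matrix.of fun i j => (Fintype.card ι : ℝ)⁻¹ - (if i = j then 1 else 0)
    + (if i = o then (1:ℝ) else 0) * (if j = o then 1 else 0)

lemma Smat_mul_Tmat [Nonempty ι] (o : ι) : Smat o * Tmat o = 1 := by
  have hc : (Fintype.card ι : ℝ) ≠ 0 := Nat.cast_ne_zero.mpr Fintype.card_ne_zero
  ext i k
  simp only [Matrix.mul_apply, Smat, Tmat, Matrix.of_apply, Matrix.one_apply,
    sub_mul, add_mul, mul_sub, mul_add, ite_mul, mul_ite, one_mul, zero_mul, mul_one, mul_zero,
    Finset.sum_sub_distrib, Finset.sum_add_distrib, Finset.sum_ite_eq, Finset.sum_ite_eq',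
    Finset.mem_univ, if_true, Finset.sum_const, Finset.card_univ, nsmul_eq_mul]
  by_cases hik : i = k <;> by_cases hio : i = o <;> by_cases hko : k = o <;>
    subst_eqs <;> simp_all <;> field_simp

lemma Tmat_mul_Smat [Nonempty ι] (o : ι) : Tmat o * Smat o = 1 := by
  have hc : (Fintype.card ι : ℝ) ≠ 0 := Nat.cast_ne_zero.mpr Fintype.card_ne_zero
  ext i k
  simp only [Matrix.mul_apply, Smat, Tmat, Matrix.of_apply, Matrix.one_apply,
    sub_mul, add_mul, mul_sub, mul_add, ite_mul, mul_ite, one_mul, zero_mul, mul_one, mul_zero,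
    Finset.sum_sub_distrib, Finset.sum_add_distrib, Finset.sum_ite_eq, Finset.sum_ite_eq',
    Finset.mem_univ, if_true, Finset.sum_const, Finset.card_univ, nsmul_eq_mul]
  by_cases hik : i = k <;> by_cases hio : i = o <;> by_cases hko : k = o <;>
    subst_eqs <;> simp_all
  rw [Finset.sum_congr rfl (fun x _ => show _ = 1/(Fintype.card ι:ℝ) from by
    by_cases h : x = o <;> simp [h, Ne.symm, div_eq_div_iff] <;> ring)]
  rw [Finset.sum_const, Finset.card_univ, nsmul_eq_mul]
  field_simp

lemma sum_Smat_col (o : ι) (c : ι) :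
    ∑ i, Smat o i c = if c = o then (Fintype.card ι : ℝ) else 0 := by
  simp only [Smat, Matrix.of_apply, Finset.sum_sub_distrib, Finset.sum_add_distrib,
    Finset.sum_ite_eq, Finset.sum_ite_eq', Finset.mem_univ, if_true, Finset.sum_const,
    Finset.card_univ, nsmul_eq_mul, mul_ite, mul_one, mul_zero]
  by_cases hco : c = o <;> simp [hco]

lemma Smat_self (o : ι) (b : ι) : Smat o b o = 1 := by
  simp [Smat]

end SmatTmat

section Prod
variable {ι κ : Type*} [Fintype ι] [DecidableEq ι] [Fintype κ] [DecidableEq κ]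

noncomputable def Pk (o : ι) (o' : κ) : Matrix (ι × κ) (ι × κ) ℝ :=
  Matrix.of fun x y => Smat o x.1 y.1 * Smat o' x.2 y.2

noncomputable def Pkinv (o : ι) (o' : κ) : Matrix (ι × κ) (ι × κ) ℝ :=
  Matrix.of fun x y => Tmat o x.1 y.1 * Tmat o' x.2 y.2

noncomputable def dvec (o : ι) (o' : κ) : ι × κ → ℝ := fun cd =>
  if cd.2 = o' then
    (if cd.1 = o then ((Fintype.card ι : ℝ) - 1) * (Fintype.card κ : ℝ)
     else -(Fintype.card κ : ℝ))
  else 0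

lemma prod_mul_helper (M N : Matrix ι ι ℝ) (M' N' : Matrix κ κ ℝ) (a c : ι) (b d : κ) :
    ∑ xy : ι × κ, (M a xy.1 * M' b xy.2) * (N xy.1 c * N' xy.2 d)
      = (M * N) a c * ((M' * N') b d) := by
  rw [Fintype.sum_prod_type, Matrix.mul_apply, Matrix.mul_apply, Finset.sum_mul_sum]
  exact Finset.sum_congr rfl fun x _ => Finset.sum_congr rfl fun y _ => by ring

lemma one_prod_apply (a c : ι) (b d : κ) :
    ((1 : Matrix ι ι ℝ) a c) * ((1 : Matrix κ κ ℝ) b d)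
      = (1 : Matrix (ι × κ) (ι × κ) ℝ) (a, b) (c, d) := by
  simp only [Matrix.one_apply, Prod.mk.injEq, ite_mul, one_mul, zero_mul, mul_ite, mul_one,
    mul_zero]
  by_cases h1 : a = c <;> by_cases h2 : b = d <;> simp [h1, h2]

lemma Pk_mul_Pkinv [Nonempty ι] [Nonempty κ] (o : ι) (o' : κ) : Pk o o' * Pkinv o o' = 1 := by
  ext ⟨a, b⟩ ⟨c, d⟩
  rw [Matrix.mul_apply]
  simp only [Pk, Pkinv, Matrix.of_apply]
  rw [prod_mul_helper, Smat_mul_Tmat, Smat_mul_Tmat, one_prod_apply]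

lemma adj_mul_Pk (o : ι) (o' : κ) :
    (Matrix.of fun x y : ι × κ => if x.1 = y.1 then (0:ℝ) else 1) * Pk o o'
      = Pk o o' * Matrix.diagonal (dvec o o') := by
  ext ⟨a, b⟩ ⟨c, d⟩
  rw [Matrix.mul_apply, Matrix.mul_diagonal]
  simp only [Pk, Matrix.of_apply]
  rw [Fintype.sum_prod_type]
  have hsummand : ∀ x y, (if a = x then (0:ℝ) else 1) * (Smat o x c * Smat o' y d)
      = ((Smat o x c - (if a = x then 1 else 0) * Smat o x c)) * Smat o' y d := by
    intro x y
    by_cases h : a = x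
    · simp [h]
    · simp only [if_neg h]; ring
  simp_rw [hsummand, ← Finset.mul_sum]
  rw [← Finset.sum_mul, Finset.sum_sub_distrib]
  simp_rw [ite_mul, one_mul, zero_mul]
  rw [Finset.sum_ite_eq Finset.univ a (fun x => Smat o x c)]
  simp only [Finset.mem_univ, if_true]
  rw [sum_Smat_col, sum_Smat_col]
  simp only [dvec]
  by_cases hd : d = o'
  · simp only [hd, if_pos rfl, Smat_self, eq_self_iff_true, if_true]
    by_cases hc : c = o
    · simp only [hc, if_pos rfl, Smat_self, eq_self_iff_true, if_true]; ring
    · simp only [if_neg hc, eq_self_iff_true, if_true]; ring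
  · simp only [if_neg hd, eq_self_iff_true, if_true]; ring

end Prod

/-! ### Number theory: the connection set is the set of units -/

lemma sq_or_neg_sq (p : ℕ) [Fact p.Prime] (hp4 : p % 4 = 3) (a : ZMod p) (ha : a ≠ 0) :
    IsSquare a ∨ IsSquare (-a) := by
  rcases ZMod.pow_div_two_eq_neg_one_or_one p ha with h | h
  · exact Or.inl ((ZMod.euler_criterion p ha).mpr h)
  · right
    have hodd : Odd (p / 2) := by rw [Nat.odd_iff]; omega
    refine (ZMod.euler_criterion p (neg_ne_zero.mpr ha)).mpr ?_
    rw [neg_pow, h, hodd.neg_one_pow]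
    ring

lemma odd_pow_sq_lift (p α : ℕ) [Fact p.Prime] [NeZero (p ^ α)] (hodd : p % 2 = 1)
    (hα : 1 ≤ α) (w : (ZMod (p ^ α))ˣ)
    (hsq : IsSquare (ZMod.unitsMap (dvd_pow_self p (by omega : α ≠ 0)) w)) :
    IsSquare w := by
  have hd : p ∣ p ^ α := dvd_pow_self p (by omega : α ≠ 0)
  set f := ZMod.unitsMap hd with hf
  obtain ⟨s, hs⟩ := hsq
  obtain ⟨t, ht⟩ := ZMod.unitsMap_surjective hd s
  set k := w * (t * t)⁻¹ with hk
  have hker : k ∈ f.ker := by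
    rw [MonoidHom.mem_ker, hk, _root_.map_mul, map_inv, _root_.map_mul, ht, hs, mul_inv_cancel]
  have hp : p.Prime := Fact.out
  have hp1 : 0 < p - 1 := by have := hp.two_le; omega
  haveI : NeZero p := ⟨hp.ne_zero⟩
  have hcard : Nat.card f.ker = p ^ (α - 1) := by
    have h1 : Nat.card (ZMod (p ^ α))ˣ = Nat.card ((ZMod (p ^ α))ˣ ⧸ f.ker) * Nat.card f.ker :=
      Subgroup.card_eq_card_quotient_mul_card_subgroup f.ker
    have h2 : Nat.card ((ZMod (p ^ α))ˣ ⧸ f.ker) = Nat.card (ZMod p)ˣ :=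
      Nat.card_congr (QuotientGroup.quotientKerEquivOfSurjective f
        (ZMod.unitsMap_surjective hd)).toEquiv
    have h3 : Nat.card (ZMod (p ^ α))ˣ = p ^ (α - 1) * (p - 1) := by
      rw [Nat.card_eq_fintype_card, ZMod.card_units_eq_totient,
        Nat.totient_prime_pow hp (by omega : 0 < α)]
    have h4 : Nat.card (ZMod p)ˣ = p - 1 := by
      rw [Nat.card_eq_fintype_card, ZMod.card_units p]
    rw [h2, h3, h4] at h1
    exact Nat.eq_of_mul_eq_mul_left hp1 (by linarith [h1])
  have hk1 : k ^ (p ^ (α - 1)) = 1 := by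
    have := pow_card_eq_one' (G := f.ker) (x := ⟨k, hker⟩)
    rw [hcard] at this
    have := congrArg (Subtype.val) this
    simpa using this
  obtain ⟨t', ht'⟩ : Odd (p ^ (α - 1)) := (Nat.odd_iff.mpr hodd).pow
  have hksq : k = (k ^ (t' + 1)) * (k ^ (t' + 1)) := by
    rw [← pow_add]
    have : t' + 1 + (t' + 1) = (2 * t' + 1) + 1 := by ring
    rw [this, pow_succ, ← ht', hk1, one_mul]
  refine ⟨k ^ (t' + 1) * t, ?_⟩
  have hw : w = k * (t * t) := by rw [hk, inv_mul_cancel_right]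
  calc w = k * (t * t) := hw
    _ = (k ^ (t' + 1) * k ^ (t' + 1)) * (t * t) := by rw [← hksq]
    _ = (k ^ (t' + 1) * t) * (k ^ (t' + 1) * t) := by rw [mul_mul_mul_comm]

lemma mem_TR_iff_isUnit (p α : ℕ) [Fact p.Prime] [NeZero (p ^ α)] (hp4 : p % 4 = 3)
    (hα : 1 ≤ α) (z : ZMod (p ^ α)) : z ∈ TR (ZMod (p ^ α)) ↔ IsUnit z := by
  have hp : p.Prime := Fact.out
  haveI : NeZero p := ⟨hp.ne_zero⟩
  constructor
  · rintro (⟨u, hu⟩ | hneg)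
    · exact hu ▸ (u.isUnit.pow 2)
    · rw [Set.mem_neg] at hneg
      obtain ⟨u, hu⟩ := hneg
      have : z = -((u : ZMod (p ^ α)) ^ 2) := by rw [hu]; ring
      exact this ▸ (u.isUnit.pow 2).neg
  · intro hz
    have hd : p ∣ p ^ α := dvd_pow_self p (by omega : α ≠ 0)
    set f := ZMod.unitsMap hd with hf
    set w := hz.unit with hwdef
    have hodd : p % 2 = 1 := by omega
    have hfield : ∀ x : (ZMod p)ˣ, IsSquare ((x : ZMod p)) → IsSquare x := by
      intro x hx
      obtain ⟨s, hs⟩ := hx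
      have hs0 : s ≠ 0 := by
        intro h; rw [h, mul_zero] at hs; exact x.ne_zero hs
      refine ⟨(IsUnit.mk0 s hs0).unit, Units.ext ?_⟩
      simpa using hs
    have hcases := sq_or_neg_sq p hp4 ((f w : ZMod p)) (f w).ne_zero
    rcases hcases with h | h
    · obtain ⟨v, hv⟩ := odd_pow_sq_lift p α hodd hα w (hfield _ h)
      left
      refine ⟨v, ?_⟩
      have := congrArg (Units.val) hv
      rw [IsUnit.unit_spec] at this
      rw [sq]
      exact this.symm
    · have hneg : -((f w : ZMod p)) = ((- f w : (ZMod p)ˣ) : ZMod p) := by simp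
      rw [hneg] at h
      have hfneg : f (-w) = - f w := by
        apply Units.ext
        rw [hf, ZMod.unitsMap_def]
        simp
      obtain ⟨v, hv⟩ := odd_pow_sq_lift p α hodd hα (-w) (by rw [hfneg]; exact hfield _ h)
      right
      rw [Set.mem_neg]
      refine ⟨v, ?_⟩
      have := congrArg (Units.val) hv
      rw [Units.val_neg, IsUnit.unit_spec] at this
      rw [sq]
      exact this.symm

lemma isUnit_iff_castHom (p α : ℕ) [Fact p.Prime] [NeZero (p ^ α)] (hα : 1 ≤ α)
    (z : ZMod (p ^ α)) :
    IsUnit z ↔ ZMod.castHom (dvd_pow_self p (by omega : α ≠ 0)) (ZMod p) z ≠ 0 := by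
  have hp : p.Prime := Fact.out
  haveI : NeZero p := ⟨hp.ne_zero⟩
  constructor
  · intro hz h0
    exact (hz.map (ZMod.castHom _ (ZMod p))).ne_zero h0
  · intro h0
    have hz : ((z.val : ℕ) : ZMod (p ^ α)) = z := by rw [ZMod.natCast_val, ZMod.cast_id]
    have hcast : ZMod.castHom (dvd_pow_self p (by omega : α ≠ 0)) (ZMod p) z
        = ((z.val : ℕ) : ZMod p) := by rw [← hz, map_natCast, hz]
    rw [hcast] at h0
    have hnd : ¬ p ∣ z.val := fun hdvd => h0 ((ZMod.natCast_eq_zero_iff _ _).mpr hdvd)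
    have hcop : Nat.Coprime z.val (p ^ α) :=
      Nat.Coprime.pow_right _ ((Nat.coprime_comm).mp ((Nat.Prime.coprime_iff_not_dvd hp).mpr hnd))
    rw [← hz]
    exact (ZMod.isUnit_iff_coprime _ _).mpr hcop

/-! ### The reindexing equivalence -/

section Equiv
variable (p m N : ℕ) [NeZero p] [NeZero m] [NeZero N]

def gfun : ZMod p × Fin m → ZMod N := fun x => ((x.1.val + p * x.2.val : ℕ) : ZMod N)

lemma gfun_injective (h : p * m = N) : Function.Injective (gfun p m N) := by
  intro x y hxy
  have hp : 0 < p := Nat.pos_of_ne_zero (NeZero.ne p)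
  have hb : ∀ z : ZMod p × Fin m, z.1.val + p * z.2.val < N := by
    intro z
    calc z.1.val + p * z.2.val < p + p * z.2.val := by
          have := ZMod.val_lt z.1; omega
      _ = p * (z.2.val + 1) := by ring
      _ ≤ p * m := Nat.mul_le_mul_left p z.2.isLt
      _ = N := h
  unfold gfun at hxy
  have h2 := congrArg ZMod.val hxy
  rw [ZMod.val_natCast_of_lt (hb x), ZMod.val_natCast_of_lt (hb y)] at h2
  have h3 := congrArg (· % p) h2
  simp only [Nat.add_mul_mod_self_left] at h3
  rw [Nat.mod_eq_of_lt (ZMod.val_lt x.1), Nat.mod_eq_of_lt (ZMod.val_lt y.1)] at h3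
  have h4 : x.2.val = y.2.val :=
    Nat.eq_of_mul_eq_mul_left hp (by omega : p * x.2.val = p * y.2.val)
  exact Prod.ext (ZMod.val_injective _ h3) (Fin.val_injective h4)

noncomputable def gEquiv (h : p * m = N) : (ZMod p × Fin m) ≃ ZMod N :=
  Equiv.ofBijective (gfun p m N)
    ((Fintype.bijective_iff_injective_and_card _).mpr
      ⟨gfun_injective p m N h, by simp [ZMod.card, h]⟩)

lemma gEquiv_apply (h : p * m = N) (z : ZMod p × Fin m) :
    gEquiv p m N h z = ((z.1.val + p * z.2.val : ℕ) : ZMod N) := rfl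

end Equiv

open scoped Classical in
/-- The spectrum of `𝒢_{ℤ_{p^α}}` for a prime `p ≡ 3 (mod 4)`:
eigenvalue `p^{α-1}(p-1)` with multiplicity 1, `-p^{α-1}` with multiplicity `p-1`,
and `0` with multiplicity `p^α - p`. -/
theorem stmt8 (p α : ℕ) [NeZero (p ^ α)] (hp : p.Prime) (hp4 : p % 4 = 3) (hα : 1 ≤ α) :
    (adjMat (ZMod (p ^ α))).charpoly =
      (X - C ((p : ℝ) ^ (α - 1) * ((p : ℝ) - 1))) *
      (X + C ((p : ℝ) ^ (α - 1))) ^ (p - 1) *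
      X ^ (p ^ α - p) := by
  haveI : Fact p.Prime := ⟨hp⟩
  haveI : NeZero p := ⟨hp.ne_zero⟩
  set m := p ^ (α - 1) with hm
  haveI : NeZero m := ⟨pow_ne_zero _ hp.ne_zero⟩
  haveI : Nonempty (Fin m) := ⟨⟨0, Nat.pos_of_ne_zero (NeZero.ne m)⟩⟩
  have hα' : α - 1 + 1 = α := by omega
  have hpm : p * m = p ^ α := by rw [hm, mul_comm, ← pow_succ, hα']
  set e := gEquiv p m (p ^ α) hpm with he
  rw [← Matrix.charpoly_reindex e.symm (adjMat (ZMod (p ^ α)))]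
  have hA : Matrix.reindex e.symm e.symm (adjMat (ZMod (p ^ α)))
      = Matrix.of (fun x y : ZMod p × Fin m => if x.1 = y.1 then (0:ℝ) else 1) := by
    ext x y
    simp only [Matrix.reindex_apply, Matrix.submatrix_apply, Equiv.symm_symm, adjMat,
      Matrix.of_apply]
    have hcast : ∀ z : ZMod p × Fin m,
        ZMod.castHom (dvd_pow_self p (by omega : α ≠ 0)) (ZMod p) (e z) = z.1 := by
      intro z
      rw [he, gEquiv_apply, map_natCast]
      push_cast
      simp [ZMod.natCast_self, ZMod.natCast_val, ZMod.cast_id]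
    have hmem : (e x - e y ∈ TR (ZMod (p ^ α))) ↔ ¬ (x.1 = y.1) := by
      rw [mem_TR_iff_isUnit p α hp4 hα, isUnit_iff_castHom p α hα, map_sub, hcast, hcast,
        sub_ne_zero]
    by_cases hxy : x.1 = y.1
    · rw [if_neg (fun hmem' => (hmem.mp hmem') hxy), if_pos hxy]
    · rw [if_pos (hmem.mpr hxy), if_neg hxy]
  rw [hA]
  have hfact : (Matrix.of fun x y : ZMod p × Fin m => if x.1 = y.1 then (0:ℝ) else 1)
      = Pk (0 : ZMod p) (0 : Fin m) * Matrix.diagonal (dvec 0 0) * Pkinv 0 0 := by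
    calc (Matrix.of fun x y : ZMod p × Fin m => if x.1 = y.1 then (0:ℝ) else 1)
        = (Matrix.of fun x y : ZMod p × Fin m => if x.1 = y.1 then (0:ℝ) else 1)
          * (Pk (0 : ZMod p) (0 : Fin m) * Pkinv 0 0) := by rw [Pk_mul_Pkinv, mul_one]
      _ = ((Matrix.of fun x y : ZMod p × Fin m => if x.1 = y.1 then (0:ℝ) else 1)
          * Pk (0 : ZMod p) (0 : Fin m)) * Pkinv 0 0 := by rw [mul_assoc]
      _ = Pk (0 : ZMod p) (0 : Fin m) * Matrix.diagonal (dvec 0 0) * Pkinv 0 0 := by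
          rw [adj_mul_Pk]
  rw [hfact, charpoly_conj' _ _ _ (Pk_mul_Pkinv 0 0), charpoly_diagonal']
  rw [Fintype.prod_prod_type]
  simp_rw [dvec, ZMod.card, Fintype.card_fin]
  have hinner : ∀ w : ℝ, (∏ d : Fin m, (X - C (if d = (0:Fin m) then w else (0:ℝ))))
      = (X - C w) * X ^ (m - 1) := by
    intro w
    rw [← Finset.prod_erase_mul Finset.univ _ (Finset.mem_univ (0 : Fin m))]
    rw [Finset.prod_congr rfl (fun d hd => by
      rw [if_neg (Finset.ne_of_mem_erase hd), map_zero, sub_zero]),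
      Finset.prod_const, Finset.card_erase_of_mem (Finset.mem_univ _), Finset.card_univ,
      Fintype.card_fin, if_pos rfl, mul_comm]
  rw [Finset.prod_congr rfl (fun c _ => hinner _)]
  rw [Finset.prod_mul_distrib, Finset.prod_const, Finset.card_univ, ZMod.card]
  have houter : (∏ c : ZMod p, (X - C (if c = (0:ZMod p) then ((p:ℝ)-1)*(m:ℝ) else -(m:ℝ))))
      = (X - C (((p:ℝ)-1)*(m:ℝ))) * (X + C (m:ℝ)) ^ (p - 1) := by
    rw [← Finset.prod_erase_mul Finset.univ _ (Finset.mem_univ (0 : ZMod p))]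
    rw [Finset.prod_congr rfl (fun c hc => by
      rw [if_neg (Finset.ne_of_mem_erase hc), map_neg, sub_neg_eq_add]),
      Finset.prod_const, Finset.card_erase_of_mem (Finset.mem_univ _), Finset.card_univ,
      ZMod.card, if_pos rfl, mul_comm]
  rw [houter, ← pow_mul]
  have hexp : (m - 1) * p = p ^ α - p := by rw [Nat.sub_mul, one_mul, mul_comm m p, hpm]
  have hmcast : (m:ℝ) = (p:ℝ)^(α-1) := by rw [hm]; push_cast; ring
  rw [hexp, hmcast]
  ring
end

section
/- Let p ≡ 3 (mod 4) be a prime and α ≥ 1. Then the number of triangles in 𝒢_{Z_{p^α}} equals p^{3α−2}(p−1)(p−2)/6. -/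
/-- The quadratic unitary Cayley graph `𝒢_R` as a simple graph:
`x ~ y` iff `x ≠ y` and `x - y ∈ T_R`. -/
def QUCGraph (R : Type*) [CommRing R] : SimpleGraph R where
  Adj x y := x ≠ y ∧ x - y ∈ TR R
  symm := by
    constructor
    rintro x y ⟨hne, h⟩
    refine ⟨hne.symm, ?_⟩
    have hneg : -(x - y) ∈ TR R := by
      rcases h with h | h
      · exact Or.inr (by simpa using h)
      · exact Or.inl (by simpa using h)
    simpa [neg_sub] using hneg
  loopless := ⟨fun x h => h.1 rfl⟩

/-!
For `p ≡ 3 (mod 4)` the element `-1` is not a square modulo `p`, while squaring on the units of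
`ℤ/p^α` has kernel `{±1}`; so the squares form a subgroup of index two not containing `-1`, and
every unit is a square or minus a square. Hence `T` is the unit group and `x ~ y` exactly when
`x` and `y` differ modulo `p`. A triangle with an ordering of its vertices is then a triple whose
reduction modulo `p` is injective: there are `p (p - 1) (p - 2)` injective triples in `ℤ/p`, each
with `(p^(α-1))^3` lifts, and each triangle has `3!` orderings.
-/

open Finset Function
open scoped Nat

theorem Finset.card_image_univ_eq_iff {α β : Type*} [Fintype α] [DecidableEq β]
    {f : α → β} :
    #(univ.image f) = Fintype.card α ↔ Injective f := by
  rw [← card_univ, card_image_iff, coe_univ, Set.injOn_univ]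

theorem Finset.card_filter_univ_image_eq {V : Type*} [Fintype V] [DecidableEq V] {n : ℕ}
    {s : Finset V} (hs : #s = n) :
    #{t : Fin n → V | univ.image t = s} = n ! := by
  have hcard : Fintype.card (Fin n ≃ s) = n ! := by
    rw [Fintype.card_equiv (s.equivFin.trans (finCongr hs)).symm, Fintype.card_fin]
  rw [← hcard, ← card_univ]
  symm
  refine card_bij (fun e _ => fun i => (e i : V)) (fun e _ => mem_filter.mpr ⟨mem_univ _, ?_⟩)
    (fun e _ e' _ h => Equiv.ext fun i => Subtype.ext (congrFun h i)) (fun t ht => ?_)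
  · ext x
    simp only [mem_univ, true_and, mem_image]
    exact ⟨fun ⟨i, hi⟩ => hi ▸ (e i).2, fun hx => ⟨e.symm ⟨x, hx⟩, by simp⟩⟩
  · have himage : univ.image t = s := (mem_filter.mp ht).2
    have hmem : ∀ i, t i ∈ s := fun i => himage ▸ mem_image_of_mem t (mem_univ i)
    have hinj : Injective t := card_image_univ_eq_iff.mp (by rw [himage, hs, Fintype.card_fin])
    have hsurj : ∀ x ∈ s, ∃ i, t i = x := fun x hx => by simpa [← himage] using hx
    refine ⟨Equiv.ofBijective (fun i => ⟨t i, hmem i⟩)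
      ⟨fun i j h => hinj (congrArg Subtype.val h), fun ⟨x, hx⟩ => ?_⟩, mem_univ _, rfl⟩
    obtain ⟨i, rfl⟩ := hsurj x hx
    exact ⟨i, rfl⟩

namespace SimpleGraph

variable {V : Type*} [DecidableEq V] (G : SimpleGraph V)

theorem isNClique_image_univ_iff {n : ℕ} {t : Fin n → V} :
    G.IsNClique n (univ.image t) ↔ Pairwise (G.Adj on t) := by
  constructor
  · rintro ⟨hclique, hcard⟩ i j hij
    have ht : Injective t := card_image_univ_eq_iff.mp (by rw [hcard, Fintype.card_fin])
    exact hclique (by simp) (by simp) (ht.ne hij)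
  · intro h
    have ht : Injective t := fun i j hij => by_contra fun hne => (h hne).ne hij
    refine ⟨?_, by rw [card_image_of_injective _ ht, Finset.card_fin]⟩
    rw [coe_image, coe_univ, Set.image_univ]
    rintro _ ⟨i, rfl⟩ _ ⟨j, rfl⟩ hij
    exact h fun h' => hij (h' ▸ rfl)

open Classical in
theorem factorial_mul_card_cliqueFinset [Fintype V] (n : ℕ) :
    n ! * #(G.cliqueFinset n) = #{t : Fin n → V | Pairwise (G.Adj on t)} := by
  have hmaps : ∀ t ∈ ({t : Fin n → V | Pairwise (G.Adj on t)} : Finset _),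
      univ.image t ∈ G.cliqueFinset n := fun t ht => by
    rw [mem_cliqueFinset_iff, isNClique_image_univ_iff]
    exact (mem_filter.mp ht).2
  rw [card_eq_sum_card_fiberwise hmaps, sum_congr rfl fun s hs => ?_, sum_const, smul_eq_mul,
    mul_comm]
  rw [filter_filter, ← card_filter_univ_image_eq (mem_cliqueFinset_iff.mp hs).2]
  congr 1
  refine filter_congr fun t _ => and_iff_right_of_imp fun h => ?_
  rw [← isNClique_image_univ_iff, h]
  exact mem_cliqueFinset_iff.mp hs

end SimpleGraph

theorem Finset.card_filter_comp_eq_pow_mul {ι V W : Type*} [Fintype ι] [DecidableEq ι]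
    [Fintype V] [Fintype W] [DecidableEq W] {f : V → W} {k : ℕ}
    (hf : ∀ y, #{x | f x = y} = k) (P : (ι → W) → Prop) [DecidablePred P] :
    #{t : ι → V | P (f ∘ t)} = k ^ Fintype.card ι * #{u | P u} := by
  have hmaps :
      ∀ t ∈ ({t : ι → V | P (f ∘ t)} : Finset _), f ∘ t ∈ ({u | P u} : Finset _) :=
    fun t ht => mem_filter.mpr ⟨mem_univ _, (mem_filter.mp ht).2⟩
  rw [card_eq_sum_card_fiberwise hmaps, sum_congr rfl fun u hu => ?_, sum_const, smul_eq_mul,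
    mul_comm]
  have hfiber : ({t ∈ ({t : ι → V | P (f ∘ t)} : Finset _) | f ∘ t = u})
      = Fintype.piFinset fun i => {x | f x = u i} := by
    ext t
    simp only [mem_filter, mem_univ, true_and, Fintype.mem_piFinset, funext_iff, comp_apply]
    exact ⟨And.right, fun h => ⟨by simpa [show f ∘ t = u from funext h] using hu, h⟩⟩
  rw [hfiber, Fintype.card_piFinset, prod_congr rfl fun i _ => hf (u i), prod_const, card_univ]

theorem Fintype.card_filter_injective {α β : Type*} [Fintype α] [DecidableEq α] [Fintype β]
    [DecidableEq β] :
    #{f : α → β | Injective f} = (Fintype.card β).descFactorial (Fintype.card α) := by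
  rw [← Fintype.card_embedding_eq, ← Fintype.card_subtype,
    Fintype.card_congr (Equiv.subtypeInjectiveEquivEmbedding α β)]

theorem AddMonoidHom.card_fiber_mul_card {G H : Type*} [AddGroup G] [Fintype G] [AddGroup H]
    [Fintype H] [DecidableEq H] (f : G →+ H) (hf : Surjective f) (y : H) :
    #{x | f x = y} * Fintype.card H = Fintype.card G := by
  rw [← Finset.card_univ (α := G),
    card_eq_sum_card_fiberwise (s := univ) (t := univ) (f := f) fun _ _ => mem_univ _,
    sum_congr rfl fun z _ => card_fiber_eq_of_mem_range f (hf z) (hf y), sum_const, smul_eq_mul,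
    Finset.card_univ, mul_comm]

theorem mem_range_powMonoidHom_two_or_mul_mem {G : Type*} [CommGroup G] [Finite G]
    (hker : Nat.card (powMonoidHom 2 : G →* G).ker = 2) {g : G}
    (hg : g ∉ (powMonoidHom 2 : G →* G).range) (x : G) :
    x ∈ (powMonoidHom 2 : G →* G).range ∨ g * x ∈ (powMonoidHom 2 : G →* G).range := by
  have hindex : (powMonoidHom 2 : G →* G).range.index = 2 := Subgroup.index_range.trans hker
  rw [Subgroup.mul_mem_iff_of_index_two hindex]
  tauto

namespace ZMod

variable {p α : ℕ} [Fact p.Prime]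

theorem isUnit_iff_castHom_ne_zero (hα : α ≠ 0) (x : ZMod (p ^ α)) :
    IsUnit x ↔ castHom (dvd_pow_self p hα) (ZMod p) x ≠ 0 := by
  have : NeZero (p ^ α) := ⟨pow_ne_zero _ (Fact.out : p.Prime).ne_zero⟩
  obtain ⟨a, rfl⟩ := natCast_zmod_surjective x
  rw [isUnit_natCast_iff_not_dvd_pow Fact.out (Nat.pos_of_ne_zero hα), map_natCast, Ne,
    natCast_eq_zero_iff]

theorem eq_one_or_eq_neg_one_of_sq_eq_one (hp : p ≠ 2) (hα : α ≠ 0) {x : ZMod (p ^ α)}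
    (hx : x ^ 2 = 1) : x = 1 ∨ x = -1 := by
  have hprod : (x - 1) * (x + 1) = 0 := by linear_combination hx
  by_cases hsub : IsUnit (x - 1)
  · exact Or.inr (eq_neg_of_add_eq_zero_left (hsub.mul_right_eq_zero.mp hprod))
  by_cases hadd : IsUnit (x + 1)
  · exact Or.inl (sub_eq_zero.mp (hadd.mul_left_eq_zero.mp hprod))
  rw [isUnit_iff_castHom_ne_zero hα, not_not, map_sub, map_one] at hsub
  rw [isUnit_iff_castHom_ne_zero hα, not_not, map_add, map_one] at hadd
  exact absurd (by linear_combination hadd - hsub) (Ring.two_ne_zero (by rwa [ringChar_zmod_n]))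

theorem not_isSquare_neg_one_of_prime_pow (hp4 : p % 4 = 3) (hα : α ≠ 0) :
    ¬IsSquare (-1 : ZMod (p ^ α)) := fun h => by
  have := h.map (castHom (dvd_pow_self p hα) (ZMod p))
  rw [map_neg, map_one, exists_sq_eq_neg_one_iff] at this
  exact this hp4

theorem card_ker_powMonoidHom_two_units (hp : p ≠ 2) (hα : α ≠ 0) :
    Nat.card (powMonoidHom 2 : (ZMod (p ^ α))ˣ →* (ZMod (p ^ α))ˣ).ker = 2 := by
  have hne : (1 : (ZMod (p ^ α))ˣ) ≠ -1 := fun h => by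
    have := congrArg (fun u : (ZMod (p ^ α))ˣ => castHom (dvd_pow_self p hα) (ZMod p) u) h
    simp only [Units.val_one, Units.val_neg, map_one, map_neg] at this
    exact Ring.neg_one_ne_one_of_char_ne_two (by rwa [ringChar_zmod_n]) this.symm
  have hker :
      ((powMonoidHom 2 : (ZMod (p ^ α))ˣ →* _).ker : Set (ZMod (p ^ α))ˣ) = {1, -1} := by
    ext u
    simp only [SetLike.mem_coe, MonoidHom.mem_ker, powMonoidHom_apply, Set.mem_insert_iff,
      Set.mem_singleton_iff, Units.ext_iff, Units.val_pow_eq_pow_val, Units.val_one, Units.val_neg]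
    exact ⟨eq_one_or_eq_neg_one_of_sq_eq_one hp hα, by rintro (h | h) <;> simp [h]⟩
  rw [← SetLike.coe_sort_coe, Nat.card_coe_set_eq, hker, Set.ncard_pair hne]

theorem mem_TR_iff_isUnit (hp4 : p % 4 = 3) (hα : α ≠ 0) {x : ZMod (p ^ α)} :
    x ∈ TR (ZMod (p ^ α)) ↔ IsUnit x := by
  have hp : p ≠ 2 := by omega
  refine ⟨?_, ?_⟩
  · rintro (⟨u, rfl⟩ | ⟨u, hu⟩)
    · exact u.isUnit.pow 2
    · exact neg_neg x ▸ hu ▸ (u.isUnit.pow 2).neg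
  · rintro ⟨u, rfl⟩
    have hneg : (-1 : (ZMod (p ^ α))ˣ) ∉ (powMonoidHom 2).range := fun ⟨v, hv⟩ =>
      not_isSquare_neg_one_of_prime_pow hp4 hα
        ⟨v, by simpa [sq] using (congrArg Units.val hv).symm⟩
    rcases mem_range_powMonoidHom_two_or_mul_mem (card_ker_powMonoidHom_two_units hp hα) hneg u
      with ⟨v, hv⟩ | ⟨v, hv⟩
    · exact Or.inl ⟨v, by simpa using congrArg Units.val hv⟩
    · exact Or.inr ⟨v, by simpa using congrArg Units.val hv⟩

theorem qucGraph_adj_iff (hp4 : p % 4 = 3) (hα : α ≠ 0) {x y : ZMod (p ^ α)} :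
    (QUCGraph (ZMod (p ^ α))).Adj x y ↔
      castHom (dvd_pow_self p hα) (ZMod p) x ≠ castHom (dvd_pow_self p hα) (ZMod p) y := by
  change x ≠ y ∧ x - y ∈ TR _ ↔ _
  rw [mem_TR_iff_isUnit hp4 hα, isUnit_iff_castHom_ne_zero hα, map_sub, sub_ne_zero]
  exact and_iff_right_of_imp fun h hxy => h (hxy ▸ rfl)

theorem card_castHom_fiber (hα : α ≠ 0) (y : ZMod p) :
    #{x : ZMod (p ^ α) | castHom (dvd_pow_self p hα) (ZMod p) x = y} = p ^ (α - 1) := by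
  have h := (castHom (dvd_pow_self p hα) (ZMod p)).toAddMonoidHom.card_fiber_mul_card
    (castHom_surjective (dvd_pow_self p hα)) y
  rw [ZMod.card, ZMod.card] at h
  refine Nat.eq_of_mul_eq_mul_right (Fact.out : p.Prime).pos ?_
  rw [← pow_succ, Nat.sub_add_cancel (Nat.one_le_iff_ne_zero.mpr hα)]
  exact h

end ZMod

open scoped Classical in
/-- For a prime `p ≡ 3 (mod 4)` and `α ≥ 1`, the number of triangles of
`𝒢_{ℤ_{p^α}}` equals `p^{3α−2}(p−1)(p−2)/6`. -/
theorem stmt16 (p α : ℕ) [NeZero (p ^ α)] (hp : p.Prime) (hp4 : p % 4 = 3) (hα : 1 ≤ α) :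
    6 * ((QUCGraph (ZMod (p ^ α))).cliqueFinset 3).card =
      p ^ (3 * α - 2) * (p - 1) * (p - 2) := by
  have : Fact p.Prime := ⟨hp⟩
  have hα' : α ≠ 0 := by omega
  calc 6 * #((QUCGraph (ZMod (p ^ α))).cliqueFinset 3)
      = #{t : Fin 3 → ZMod (p ^ α) | Pairwise ((QUCGraph (ZMod (p ^ α))).Adj on t)} :=
        (QUCGraph _).factorial_mul_card_cliqueFinset 3
    _ = #{t : Fin 3 → ZMod (p ^ α) |
          Injective (ZMod.castHom (dvd_pow_self p hα') (ZMod p) ∘ t)} := by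
        refine congrArg card (filter_congr fun t _ => ?_)
        simp only [injective_iff_pairwise_ne, Pairwise, onFun, comp_apply,
          ZMod.qucGraph_adj_iff hp4 hα']
    _ = (p ^ (α - 1)) ^ 3 * p.descFactorial 3 := by
        rw [card_filter_comp_eq_pow_mul (ZMod.card_castHom_fiber hα'),
          Fintype.card_filter_injective, ZMod.card, Fintype.card_fin]
    _ = p ^ (3 * α - 2) * (p - 1) * (p - 2) := by
        rw [show p ^ (3 * α - 2) = (p ^ (α - 1)) ^ 3 * p by
          rw [← pow_mul, ← pow_succ]; congr 1; omega]
        simp only [Nat.descFactorial, Nat.sub_zero]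
        ring
end

section
/- Let R₀ be a finite local ring with maximal ideal M₀ of order m₀ such that |R₀|/m₀ ≡ 3 (mod 4). Then the quadratic unitary Cayley graph 𝒢_{R₀} is Ramanujan if and only if |R₀| ≥ (m₀ + 2)²/4. -/
/-! Write `m = |M₀|`, `n = |R₀|`. Since `-1` is not a square in the residue field and the squares
of units have index two in `R₀ˣ`, every unit is `±` a square, so `𝒢_{R₀}` joins `x` and `y` exactly
when `x - y ∉ M₀`: its adjacency matrix is `A = J - B`, with `J` the all-ones matrix and `B` the
indicator of `x - y ∈ M₀`. From `B² = m B` and `JB = BJ = m J` one gets `A² + m A = (n - m) J`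
and `A J = (n - m) J`, so `A` is annihilated by `X (X + m) (X - (n - m))`. As `A ≠ 0` has trace
zero, it has a negative eigenvalue, which must be `-m`; the Ramanujan bound therefore reduces to
`m ≤ 2 √(n - m - 1)`. -/

open Finset Matrix Polynomial IsLocalRing

theorem isSquare_or_isSquare_mul_of_not_isSquare {G : Type*} [CommGroup G] [Finite G] {a g : G}
    (hsq : ∀ x : G, x ^ 2 = 1 → x = 1 ∨ x = a) (hg : ¬IsSquare g) (u : G) :
    IsSquare u ∨ IsSquare (g * u) := by
  set S := (powMonoidHom 2 : G →* G).range
  -- the kernel of squaring has at most two elements and `g ∉ S`, so `S` has index exactly two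
  have hmem : ∀ x, x ∈ S ↔ IsSquare x := fun x => by
    simp [S, isSquare_iff_exists_sq, eq_comm]
  have hindex : S.index = 2 := by
    have hker : Nat.card (powMonoidHom 2 : G →* G).ker ≤ 2 := by
      rw [← SetLike.coe_sort_coe, Nat.card_coe_set_eq]
      calc _ ≤ ({1, a} : Set G).ncard := Set.ncard_le_ncard fun x hx => hsq x hx
        _ ≤ 2 := (Set.ncard_insert_le _ _).trans (by simp)
    have hS : S.index ≠ 1 := fun h => hg ((hmem g).1 (Subgroup.index_eq_one.1 h ▸ trivial))
    have := S.index_ne_zero_of_finite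
    rw [Subgroup.index_range] at *
    omega
  by_contra! h
  exact h.2 ((hmem _).1 ((Subgroup.mul_mem_iff_of_index_two hindex).2
    (iff_of_false (fun hg' => hg ((hmem g).1 hg')) fun hu => h.1 ((hmem u).1 hu))))

namespace IsLocalRing

variable {R : Type*} [CommRing R] [IsLocalRing R]

theorem eq_one_or_eq_neg_one_of_sq_eq_one (h2 : IsUnit (2 : R)) {x : R} (hx : x ^ 2 = 1) :
    x = 1 ∨ x = -1 := by
  have hprod : (x - 1) * (x + 1) = 0 := by linear_combination hx
  rcases isUnit_or_isUnit_of_isUnit_add (a := x + 1) (b := -(x - 1)) (by ring_nf; exact h2)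
    with h | h
  · exact Or.inl (sub_eq_zero.1 (h.mul_left_eq_zero.1 hprod))
  · exact Or.inr (eq_neg_of_add_eq_zero_left (((IsUnit.neg_iff _).1 h).mul_right_eq_zero.1 hprod))

theorem isUnit_two_of_not_isSquare_neg_one (hk : ¬IsSquare (-1 : ResidueField R)) :
    IsUnit (2 : R) := by
  rw [← residue_ne_zero_iff_isUnit]
  intro h2
  have h2 : (2 : ResidueField R) = 0 := by rwa [map_ofNat] at h2
  exact hk ⟨1, by linear_combination -h2⟩

theorem not_isSquare_neg_one_units (hk : ¬IsSquare (-1 : ResidueField R)) :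
    ¬IsSquare (-1 : Rˣ) := by
  rintro ⟨s, hs⟩
  exact hk ⟨residue R s, by simpa using congrArg (residue R ∘ Units.val) hs⟩

theorem mem_TR_iff_isUnit [Finite R] (hk : ¬IsSquare (-1 : ResidueField R)) (x : R) :
    x ∈ TR R ↔ IsUnit x := by
  constructor
  · rintro (⟨u, rfl⟩ | ⟨u, hu⟩)
    · exact u.isUnit.pow 2
    · simpa using (hu ▸ u.isUnit.pow 2 : IsUnit (-x)).neg
  · rintro ⟨u, rfl⟩
    have hsq (y : Rˣ) (hy : y ^ 2 = 1) : y = 1 ∨ y = -1 := by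
      rcases eq_one_or_eq_neg_one_of_sq_eq_one (isUnit_two_of_not_isSquare_neg_one hk)
          (x := (y : R)) (by rw [← Units.val_pow_eq_pow_val, hy, Units.val_one]) with h | h
      · exact Or.inl (Units.ext h)
      · exact Or.inr (Units.ext (by simpa using h))
    rcases isSquare_or_isSquare_mul_of_not_isSquare hsq (not_isSquare_neg_one_units hk) u with
      ⟨s, hs⟩ | ⟨s, hs⟩
    · exact Or.inl ⟨s, by simp [hs, sq]⟩
    · exact Or.inr ⟨s, by simpa [sq] using congrArg Units.val hs.symm⟩

end IsLocalRing

local notation "J" => of fun _ _ => (1 : ℝ)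

theorem ones_mul_ones {ι : Type*} [Fintype ι] :
    (J : Matrix ι ι ℝ) * J = (Fintype.card ι : ℝ) • J := by
  ext x y
  simp [mul_apply]

section CosetMatrix

variable {G : Type*} [AddCommGroup G] [Fintype G] (H : AddSubgroup G)

open scoped Classical in
noncomputable def cosetMatrix : Matrix G G ℝ := of fun x y => if x - y ∈ H then 1 else 0

open scoped Classical in
theorem sum_ite_sub_mem (y : G) : ∑ x, (if x - y ∈ H then (1 : ℝ) else 0) = Nat.card H := by
  rw [Fintype.sum_equiv (Equiv.subRight y) (fun x => if x - y ∈ H then (1 : ℝ) else 0)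
    (fun x => if x ∈ H then (1 : ℝ) else 0) fun _ => rfl, sum_boole]
  simp [Nat.card_eq_fintype_card, Fintype.card_subtype]

theorem cosetMatrix_mul_self :
    cosetMatrix H * cosetMatrix H = (Nat.card H : ℝ) • cosetMatrix H := by
  classical
  ext x y
  simp only [cosetMatrix, mul_apply, of_apply, Matrix.smul_apply, smul_eq_mul, mul_ite,
    mul_one, mul_zero]
  split_ifs with hxy
  · rw [← sum_ite_sub_mem H y]
    refine sum_congr rfl fun z _ => ?_
    have : x - z ∈ H ↔ z - y ∈ H := by
      rw [← sub_sub_sub_cancel_right x z y, sub_eq_add_neg, H.add_mem_cancel_left hxy, neg_mem_iff]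
    simp [this]
  · refine sum_eq_zero fun z _ => ?_
    split_ifs with h1 h2 <;> first | rfl | exact absurd (by simpa using H.add_mem h2 h1) hxy

theorem cosetMatrix_mul_ones : cosetMatrix H * J = (Nat.card H : ℝ) • J := by
  ext x y
  simp only [cosetMatrix, mul_apply, of_apply, Matrix.smul_apply, smul_eq_mul, mul_one]
  rw [← sum_ite_sub_mem H x]
  exact sum_congr rfl fun z _ => by rw [← neg_sub, neg_mem_iff]

theorem ones_mul_cosetMatrix : J * cosetMatrix H = (Nat.card H : ℝ) • J := by
  ext x y
  simp only [cosetMatrix, mul_apply, of_apply, Matrix.smul_apply, smul_eq_mul, one_mul, mul_one]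
  exact sum_ite_sub_mem H y

end CosetMatrix

namespace Matrix.IsHermitian

variable {ι : Type*} [Fintype ι] [DecidableEq ι] {A : Matrix ι ι ℝ} (hA : A.IsHermitian)

theorem eval_eigenvalues_eq_zero {p : ℝ[X]} (hp : aeval A p = 0) (i : ι) :
    p.eval (hA.eigenvalues i) = 0 := by
  have hv := Module.End.aeval_apply_of_mem_apply_eq_smul (f := toLinAlgEquiv' A) (p := p)
    (by simpa using hA.mulVec_eigenvectorBasis i)
  rw [aeval_algHom_apply, hp, map_zero, LinearMap.zero_apply, eq_comm, smul_eq_zero] at hv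
  exact hv.resolve_right ((WithLp.ofLp_eq_zero 2).not.2 (hA.eigenvectorBasis.orthonormal.ne_zero i))

theorem exists_eigenvalues_neg (h0 : A ≠ 0) (htr : A.trace = 0) : ∃ i, hA.eigenvalues i < 0 := by
  by_contra! hnonneg
  have hsum : ∑ i, hA.eigenvalues i = 0 := by simpa [hA.trace_eq_sum_eigenvalues] using htr
  have hzero := (sum_eq_zero_iff_of_nonneg fun i _ => hnonneg i).1 hsum
  exact h0 (hA.eigenvalues_eq_zero_iff.1 (funext fun i => hzero i (mem_univ i)))

end Matrix.IsHermitian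

section AdjMat

variable {R : Type*} [CommRing R] [IsLocalRing R] [Fintype R]

theorem adjMat_eq (hk : ¬IsSquare (-1 : ResidueField R)) :
    adjMat R = J - cosetMatrix (maximalIdeal R).toAddSubgroup := by
  classical
  ext x y
  simp only [adjMat, cosetMatrix, Matrix.sub_apply, of_apply, Submodule.mem_toAddSubgroup,
    mem_maximalIdeal, mem_nonunits_iff, mem_TR_iff_isUnit hk]
  split_ifs <;> simp_all

theorem adjMat_mul_self_add (hk : ¬IsSquare (-1 : ResidueField R)) :
    adjMat R * adjMat R + (Nat.card (maximalIdeal R) : ℝ) • adjMat R =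
      ((Fintype.card R : ℝ) - Nat.card (maximalIdeal R)) • J := by
  rw [adjMat_eq hk, sub_mul, mul_sub, mul_sub, ones_mul_ones, ones_mul_cosetMatrix,
    cosetMatrix_mul_ones, cosetMatrix_mul_self]
  module

theorem adjMat_mul_ones (hk : ¬IsSquare (-1 : ResidueField R)) :
    adjMat R * J = ((Fintype.card R : ℝ) - Nat.card (maximalIdeal R)) • J := by
  rw [adjMat_eq hk, sub_mul, ones_mul_ones, cosetMatrix_mul_ones, sub_smul]
  rfl

theorem aeval_adjMat [DecidableEq R] (hk : ¬IsSquare (-1 : ResidueField R)) :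
    aeval (adjMat R) ((X - C ((Fintype.card R : ℝ) - Nat.card (maximalIdeal R))) *
      (X * (X + C (Nat.card (maximalIdeal R) : ℝ)))) = 0 := by
  set c := (Fintype.card R : ℝ) - Nat.card (maximalIdeal R)
  have hquad : aeval (adjMat R) (X * (X + C (Nat.card (maximalIdeal R) : ℝ))) = c • J := by
    simp only [map_mul, map_add, aeval_X, aeval_C, Algebra.algebraMap_eq_smul_one, mul_add,
      mul_smul_comm, mul_one, adjMat_mul_self_add hk, c]
  rw [map_mul, hquad, map_sub, aeval_X, aeval_C, Algebra.algebraMap_eq_smul_one, mul_smul_comm,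
    sub_mul, adjMat_mul_ones hk, smul_mul_assoc, one_mul, sub_self, smul_zero]

theorem eigenvalues_adjMat_eq [DecidableEq R] (hk : ¬IsSquare (-1 : ResidueField R))
    (hA : (adjMat R).IsHermitian) (i : R) :
    hA.eigenvalues i = (Fintype.card R : ℝ) - Nat.card (maximalIdeal R) ∨
      hA.eigenvalues i = 0 ∨ hA.eigenvalues i = -(Nat.card (maximalIdeal R) : ℝ) := by
  have hroot := hA.eval_eigenvalues_eq_zero (aeval_adjMat hk) i
  simp only [eval_mul, eval_sub, eval_add, eval_X, eval_C, mul_eq_zero, sub_eq_zero] at hroot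
  rwa [add_eq_zero_iff_eq_neg] at hroot

theorem trace_adjMat (hk : ¬IsSquare (-1 : ResidueField R)) : (adjMat R).trace = 0 := by
  simp [adjMat_eq hk, trace, cosetMatrix]

theorem adjMat_ne_zero (hk : ¬IsSquare (-1 : ResidueField R)) : adjMat R ≠ 0 := by
  intro h
  simpa [adjMat_eq hk, cosetMatrix] using congrFun₂ h 1 0

end AdjMat

theorem IsLocalRing.card_eq_card_maximalIdeal_mul_card_residueField {R : Type*} [CommRing R]
    [IsLocalRing R] [Finite R] :
    Nat.card R = Nat.card (maximalIdeal R) * Nat.card (ResidueField R) :=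
  Submodule.card_eq_card_quotient_mul_card _

theorem FiniteField.not_isSquare_neg_one_of_card_mod_four {F : Type*} [Field F] [Finite F]
    (h : Nat.card F % 4 = 3) : ¬IsSquare (-1 : F) := by
  have := Fintype.ofFinite F
  rw [Nat.card_eq_fintype_card] at h
  exact fun hsq => FiniteField.isSquare_neg_one_iff.1 hsq h

theorem le_two_mul_sqrt_sub_sub_one_iff {n m : ℝ} (hm : 0 < m) :
    m ≤ 2 * √(n - m - 1) ↔ (m + 2) ^ 2 / 4 ≤ n := by
  rw [← div_le_iff₀' two_pos, Real.le_sqrt' (half_pos hm)]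
  constructor <;> intro h <;> linarith

open scoped Classical in
/-- Let `R₀` be a finite local ring with maximal ideal `M₀` of order `m₀` such that
`|R₀|/m₀ ≡ 3 (mod 4)`. Then `𝒢_{R₀}`, which is `(|R₀| − m₀)`-regular, is Ramanujan
(every adjacency eigenvalue `λ` with `|λ| ≠ |R₀| − m₀` satisfies
`|λ| ≤ 2√(|R₀| − m₀ − 1)`) if and only if `|R₀| ≥ (m₀ + 2)²/4`. -/
theorem stmt17 (R₀ : Type*) [CommRing R₀] [IsLocalRing R₀] [Fintype R₀]
    (M₀ : Ideal R₀) (hM : M₀.IsMaximal)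
    (h3 : Fintype.card R₀ / Nat.card M₀ % 4 = 3)
    (hA : (adjMat R₀).IsHermitian) :
    (∀ i, |hA.eigenvalues i| ≠ (Fintype.card R₀ : ℝ) - Nat.card M₀ →
        |hA.eigenvalues i| ≤ 2 * Real.sqrt ((Fintype.card R₀ : ℝ) - Nat.card M₀ - 1)) ↔
      ((Nat.card M₀ : ℝ) + 2) ^ 2 / 4 ≤ (Fintype.card R₀ : ℝ) := by
  obtain rfl := eq_maximalIdeal hM
  have : Finite (ResidueField R₀) := Finite.of_surjective _ residue_surjective
  have hcard := card_eq_card_maximalIdeal_mul_card_residueField (R := R₀)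
  rw [Nat.card_eq_fintype_card] at hcard
  have hm_pos : 0 < Nat.card (maximalIdeal R₀) := Nat.card_pos
  have hq : Nat.card (ResidueField R₀) % 4 = 3 := by
    rwa [hcard, Nat.mul_div_cancel_left _ hm_pos] at h3
  have hk := FiniteField.not_isSquare_neg_one_of_card_mod_four hq
  have hnm : (3 * Nat.card (maximalIdeal R₀) : ℝ) ≤ Fintype.card R₀ := by
    rw [hcard, mul_comm]
    exact_mod_cast Nat.mul_le_mul_left _ (by omega)
  have hm : (0 : ℝ) < Nat.card (maximalIdeal R₀) := by exact_mod_cast hm_pos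
  obtain ⟨j, hj⟩ := hA.exists_eigenvalues_neg (adjMat_ne_zero hk) (trace_adjMat hk)
  have hjm : hA.eigenvalues j = -(Nat.card (maximalIdeal R₀) : ℝ) := by
    rcases eigenvalues_adjMat_eq hk hA j with h | h | h <;> first | exact h | linarith
  rw [← le_two_mul_sqrt_sub_sub_one_iff hm]
  constructor
  · intro hRam
    simpa [hjm] using hRam j (by rw [hjm, abs_neg, abs_of_pos hm]; linarith)
  · intro hbound i hi
    rcases eigenvalues_adjMat_eq hk hA i with h | h | h
    · exact absurd (by rw [h, abs_of_nonneg (by linarith)]) hi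
    · rw [h, abs_zero]; positivity
    · rwa [h, abs_neg, abs_of_pos hm]
end
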